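/- Let (R,V) be a generalized root system with base S and let β ∈ R. Then the support of β is connected: there is no partition supp β = I' ⊔ I'' into two nonempty subsets with ⟨α',α''⟩ = 0 for all α' ∈ I' and α'' ∈ I''. -/

import Mathlib

open scoped RealInnerProductSpace

variable {V : Type*} [NormedAddCommGroup V] [InnerProductSpace ℝ V] [FiniteDimensional ℝ V]

/-- A generalized root system: `R` is a nonempty finite spanning set such that for
`α, β ∈ R`: `⟪α,β⟫ < 0` implies `α+β ∈ R`; `⟪α,β⟫ > 0` implies `α-β ∈ R`; and
`⟪α,β⟫ = 0` implies `α+β ∈ R ↔ α-β ∈ R`. -/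
def IsGRS (R : Set V) : Prop :=
  R.Nonempty ∧ R.Finite ∧ Submodule.span ℝ R = ⊤ ∧
    ∀ α ∈ R, ∀ β ∈ R,
      (⟪α, β⟫ < 0 → α + β ∈ R) ∧
      (0 < ⟪α, β⟫ → α - β ∈ R) ∧
      (⟪α, β⟫ = 0 → (α + β ∈ R ↔ α - β ∈ R))

/-- `v` is a linear combination of elements of `S` with nonnegative integer coefficients. -/
def IsNonnegIntComb (S : Set V) (v : V) : Prop :=
  ∃ c : V →₀ ℤ, ↑c.support ⊆ S ∧ (∀ α, 0 ≤ c α) ∧ v = c.sum fun α n => (n : ℝ) • α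

/-- A base of a GRS `R`: a subset of `R` which is a vector-space basis of `V` such that
every root is a linear combination of `S` with coefficients all nonnegative integers or
all nonpositive integers. -/
def IsBase (R S : Set V) : Prop :=
  S ⊆ R ∧ LinearIndependent ℝ ((↑) : S → V) ∧ Submodule.span ℝ S = ⊤ ∧
    ∀ β ∈ R, IsNonnegIntComb S β ∨ IsNonnegIntComb S (-β)

/-- `R⁺(S)`: the roots whose coefficients in `S` are all nonnegative integers. -/
def posRoots (R S : Set V) : Set V := {β ∈ R | IsNonnegIntComb S β}

/-- The partial order `≺_S`: `x ≺_S y` iff `y - x` is a nonnegative integer combination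
of `S`. -/
def prec (S : Set V) (x y : V) : Prop := IsNonnegIntComb S (y - x)

/-- `β` is indecomposable in `P`: `β ∈ P` and `β` is not the sum of two nonzero
elements of `P`. -/
def IsIndecomposableIn (P : Set V) (β : V) : Prop :=
  β ∈ P ∧ ¬∃ γ ∈ P, ∃ δ ∈ P, γ ≠ 0 ∧ δ ≠ 0 ∧ β = γ + δ

/-- A positive system of `R`. -/
def IsPositiveSystem (R P : Set V) : Prop :=
  P ⊆ R ∧ (∀ α ∈ P, ∀ β ∈ P, α + β ∈ R → α + β ∈ P) ∧ R = P ∪ -P ∧ P ∩ -P = {0}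

/-- Irreducibility of a GRS. -/
def IsIrreducibleGRS (R : Set V) : Prop :=
  ∀ R₁ R₂ : Set V, R = R₁ ∪ R₂ → (∀ α ∈ R₁, ∀ β ∈ R₂, ⟪α, β⟫ = 0) →
    R₁ ⊆ {0} ∨ R₂ ⊆ {0}

/-- A primitive root of `R`. -/
def IsPrimitive (R : Set V) (α : V) : Prop :=
  α ∈ R ∧ α ≠ 0 ∧ ∀ (k : ℤ) (α' : V), 0 < k → α' ∈ R → α = (k : ℝ) • α' → k = 1

/-- The orthogonal projection `π_I` of `V` onto the orthogonal complement of the span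
of `I`. -/
noncomputable def projAway (I : Set V) : V → ↥((Submodule.span ℝ I)ᗮ) :=
  fun v => Submodule.orthogonalProjection ((Submodule.span ℝ I)ᗮ) v

/-- A root system. -/
def IsRootSystem (Δ : Set V) : Prop :=
  Δ.Finite ∧ (0 : V) ∉ Δ ∧ Submodule.span ℝ Δ = ⊤ ∧
    ∀ α ∈ Δ, ∀ β ∈ Δ,
      (β - (2 * ⟪β, α⟫ / ⟪α, α⟫) • α ∈ Δ) ∧
      (∃ n : ℤ, 2 * ⟪β, α⟫ / ⟪α, α⟫ = (n : ℝ)) ∧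
      ∀ t : ℝ, t • α ∈ Δ → t = 1 ∨ t = -1

/-!
Fix disjoint, mutually orthogonal sets `A`, `B` of simple roots. The coefficients of a root have a
common sign and `R = -R`, so it suffices to show, by induction on the height, that a root `β` with
nonnegative coefficients supported on `A ∪ B` is supported on `A` or on `B`. If its support meets
both, write `β = β_A + β_B`; then `⟪β, β_A⟫ = ‖β_A‖² > 0`, so `⟪β, α⟫ > 0` for some `α ∈ A` in the
support, and `γ = β - α` is a root of smaller height. By induction `γ` lies on `A` or `B`; it still
meets `B`, so it lies on `B`. Then `⟪γ, α⟫ = 0` and `γ + α = β` is a root, so `γ - α` is a root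
too, but its coefficients have both signs.
-/

open Finsupp

section LinearAlgebra

variable {M : Type*} [AddCommGroup M] [Module ℝ M]

theorem Finsupp.sum_intCast_smul_eq_linearCombination (c : M →₀ ℤ) :
    (c.sum fun a n => (n : ℝ) • a) = linearCombination ℤ id c := by
  simp [linearCombination_apply, Int.cast_smul_eq_zsmul]

theorem LinearIndependent.linearCombination_int_inj {S : Set M}
    (hS : LinearIndependent ℝ ((↑) : S → M)) {c d : M →₀ ℤ} (hc : ↑c.support ⊆ S)
    (hd : ↑d.support ⊆ S) (h : linearCombination ℤ id c = linearCombination ℤ id d) : c = d := by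
  have hZ : LinearIndepOn ℤ id S := linearIndependent_subtype_iff.mp (hS.restrict_scalars' ℤ)
  rw [← sub_eq_zero]
  exact linearIndepOn_iff.mp hZ _
    (sub_mem ((mem_supported ℤ c).mpr hc) ((mem_supported ℤ d).mpr hd))
    (by rw [map_sub, h, sub_self])

end LinearAlgebra

namespace Finsupp

variable {ι : Type*} {c : ι →₀ ℤ} {α : ι}

theorem support_sub_single_one_subset (hα : α ∈ c.support) :
    (c - single α 1).support ⊆ c.support := by
  classical
  intro a ha
  rcases eq_or_ne a α with rfl | ha'
  · exact hα
  · simpa [single_eq_of_ne ha'] using ha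

theorem sub_single_one_nonneg (hpos : ∀ a, 0 ≤ c a) (hα : α ∈ c.support) (a : ι) :
    0 ≤ (c - single α 1 : ι →₀ ℤ) a := by
  classical
  rcases eq_or_ne a α with rfl | ha
  · simpa using Int.add_one_le_iff.mpr (lt_of_le_of_ne (hpos a) (mem_support_iff.mp hα).symm)
  · simpa [single_eq_of_ne ha] using hpos a

end Finsupp

section InnerProduct

variable {E : Type*} [NormedAddCommGroup E] [InnerProductSpace ℝ E]

theorem inner_linearCombination_int (v : E) (c : E →₀ ℤ) :
    ⟪v, linearCombination ℤ id c⟫ = c.sum fun a n => n * ⟪v, a⟫ := by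
  simp [linearCombination_apply, Finsupp.sum, inner_sum, ← Int.cast_smul_eq_zsmul ℝ,
    real_inner_smul_right]

theorem inner_linearCombination_int_eq_zero {v : E} {c : E →₀ ℤ}
    (h : ∀ a ∈ c.support, ⟪v, a⟫ = 0) : ⟪v, linearCombination ℤ id c⟫ = 0 := by
  rw [inner_linearCombination_int]
  exact Finset.sum_eq_zero fun a ha => by simp [h a ha]

theorem exists_mem_inner_linearCombination_int_pos {S A B : Set E}
    (hS : LinearIndependent ℝ ((↑) : S → E)) (horth : ∀ a ∈ A, ∀ b ∈ B, ⟪a, b⟫ = 0)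
    {c : E →₀ ℤ} (hcS : ↑c.support ⊆ S) (hcAB : ↑c.support ⊆ A ∪ B) (hpos : ∀ a, 0 ≤ c a)
    (hA : ∃ a ∈ c.support, a ∈ A) :
    ∃ a ∈ c.support, a ∈ A ∧ 0 < ⟪linearCombination ℤ id c, a⟫ := by
  classical
  set cA := c.filter (· ∈ A)
  set cB := c.filter (· ∉ A)
  set x := linearCombination ℤ id c
  have hcA_supp : cA.support = c.support.filter (· ∈ A) := support_filter _ _
  have hA_ne : linearCombination ℤ id cA ≠ 0 := by
    obtain ⟨a, hac, haA⟩ := hA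
    intro h0
    have hcA0 : cA = 0 := hS.linearCombination_int_inj
      (fun b hb => hcS (by simp_all)) (by simp) (by rw [h0, map_zero])
    simpa [cA, haA, mem_support_iff.mp hac] using congr($hcA0 a)
  have hAB_orth : ⟪linearCombination ℤ id cB, linearCombination ℤ id cA⟫ = 0 := by
    refine inner_linearCombination_int_eq_zero fun a ha => ?_
    rw [real_inner_comm]
    refine inner_linearCombination_int_eq_zero fun b hb => ?_
    simp only [cB, support_filter, Finset.mem_filter] at hb
    simp only [hcA_supp, Finset.mem_filter] at ha
    exact horth a ha.2 b ((hcAB hb.1).resolve_left hb.2)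
  have hx_pos : 0 < ⟪x, linearCombination ℤ id cA⟫ := by
    rw [show x = linearCombination ℤ id cA + linearCombination ℤ id cB by
      rw [← map_add, filter_add_filter_not], inner_add_left, hAB_orth, add_zero]
    exact real_inner_self_pos.mpr hA_ne
  rw [inner_linearCombination_int] at hx_pos
  obtain ⟨a, ha, hpos_a⟩ := Finset.exists_lt_of_sum_lt
    (by rwa [Finset.sum_const_zero] : ∑ _ ∈ cA.support, (0 : ℝ) < cA.sum _)
  rw [hcA_supp, Finset.mem_filter] at ha
  refine ⟨a, ha.1, ha.2, pos_of_mul_pos_right hpos_a ?_⟩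
  simpa [cA, ha.2] using hpos a

theorem IsBase.nonneg_or_nonpos {R S : Set E} (hS : IsBase R S) {c : E →₀ ℤ} (hcS : ↑c.support ⊆ S)
    (hc : linearCombination ℤ id c ∈ R) : (∀ a, 0 ≤ c a) ∨ ∀ a, c a ≤ 0 := by
  rcases hS.2.2.2 _ hc with ⟨d, hdS, hd, hsum⟩ | ⟨d, hdS, hd, hsum⟩ <;>
    rw [sum_intCast_smul_eq_linearCombination] at hsum
  · left
    rwa [hS.2.1.linearCombination_int_inj hcS hdS hsum]
  · right
    have : -c = d := hS.2.1.linearCombination_int_inj (by simpa using hcS) hdS (by simpa using hsum)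
    intro a
    simpa [← this] using hd a

namespace IsGRS

variable {R S : Set E}

theorem sub_mem_of_inner_pos (hR : IsGRS R) {α β : E} (hα : α ∈ R) (hβ : β ∈ R)
    (h : 0 < ⟪α, β⟫) : α - β ∈ R :=
  (hR.2.2.2 α hα β hβ).2.1 h

theorem sub_mem_of_add_mem (hR : IsGRS R) {α β : E} (hα : α ∈ R) (hβ : β ∈ R)
    (h : ⟪α, β⟫ = 0) (hadd : α + β ∈ R) : α - β ∈ R :=
  ((hR.2.2.2 α hα β hβ).2.2 h).mp hadd

theorem zero_mem (hR : IsGRS R) : (0 : E) ∈ R := by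
  obtain ⟨α, hα⟩ := hR.1
  rcases eq_or_ne α 0 with rfl | hα0
  · exact hα
  · simpa using hR.sub_mem_of_inner_pos hα hα (real_inner_self_pos.mpr hα0)

theorem neg_mem (hR : IsGRS R) {α : E} (hα : α ∈ R) : -α ∈ R := by
  simpa using hR.sub_mem_of_add_mem hR.zero_mem hα (inner_zero_left α) (by simpa using hα)

theorem add_notMem_of_inner_eq_zero (hR : IsGRS R) (hS : IsBase R S) {c : E →₀ ℤ}
    (hcS : ↑c.support ⊆ S) (hpos : ∀ a, 0 ≤ c a) (hc0 : c ≠ 0)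
    (hc : linearCombination ℤ id c ∈ R) {α : E} (hαS : α ∈ S) (hα : α ∉ c.support)
    (horth : ⟪linearCombination ℤ id c, α⟫ = 0) : linearCombination ℤ id c + α ∉ R := by
  classical
  intro hadd
  have hsub := hR.sub_mem_of_add_mem hc (hS.1 hαS) horth hadd
  rw [← one_smul ℤ α, ← id_eq α, ← linearCombination_single, ← map_sub] at hsub
  have hsubS : ↑(c - single α 1).support ⊆ S := by
    intro x hx
    rcases Finset.mem_union.mp (support_sub hx) with h | h
    · exact hcS h
    · rwa [Finset.mem_singleton.mp (support_single_subset h)]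
  obtain ⟨b, hb⟩ := support_nonempty_iff.mpr hc0
  have hbα : b ≠ α := by rintro rfl; exact hα hb
  rw [notMem_support_iff] at hα
  rcases hS.nonneg_or_nonpos hsubS hsub with h | h
  · simpa [hα] using h α
  · have := h b
    simp [single_eq_of_ne hbα] at this
    exact mem_support_iff.mp hb (le_antisymm this (hpos b))

theorem support_subset_or_of_nonneg (hR : IsGRS R) (hS : IsBase R S) {A B : Set E}
    (hAB : Disjoint A B) (horth : ∀ a ∈ A, ∀ b ∈ B, ⟪a, b⟫ = 0) (c : E →₀ ℤ)
    (hcS : ↑c.support ⊆ S) (hcAB : ↑c.support ⊆ A ∪ B) (hpos : ∀ a, 0 ≤ c a)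
    (hc : linearCombination ℤ id c ∈ R) : ↑c.support ⊆ A ∨ ↑c.support ⊆ B := by
  classical
  induction hn : c.degree.toNat using Nat.strong_induction_on generalizing c with
  | _ n ih =>
  by_cases hA : ∃ a ∈ c.support, a ∈ A
  swap
  · push Not at hA
    exact Or.inr fun b hb => (hcAB hb).resolve_left (hA b hb)
  by_cases hB : ∃ b ∈ c.support, b ∈ B
  swap
  · push Not at hB
    exact Or.inl fun a ha => (hcAB ha).resolve_right (hB a ha)
  exfalso
  obtain ⟨α, hαc, hαA, hinner⟩ :=
    exists_mem_inner_linearCombination_int_pos hS.2.1 horth hcS hcAB hpos hA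
  obtain ⟨b, hbc, hbB⟩ := hB
  set c' := c - single α 1
  have hbα : b ≠ α := by rintro rfl; exact hAB.ne_of_mem hαA hbB rfl
  have hc'_eq : linearCombination ℤ id c' = linearCombination ℤ id c - α := by
    simp [c', map_sub]
  have hc'R : linearCombination ℤ id c' ∈ R := by
    rw [hc'_eq]
    exact hR.sub_mem_of_inner_pos hc (hS.1 (hcS hαc)) hinner
  have hc'pos : ∀ a, 0 ≤ c' a := sub_single_one_nonneg hpos hαc
  have hc'c : ↑c'.support ⊆ (↑c.support : Set E) :=
    Finset.coe_subset.mpr (support_sub_single_one_subset hαc)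
  have hc'b : c' b = c b := by simp [c', single_eq_of_ne hbα]
  have hdeg : c'.degree = c.degree - 1 := by simp [c', map_sub, degree_single]
  have hdeg_nonneg : 0 ≤ c'.degree := Finset.sum_nonneg fun a _ => hc'pos a
  rcases ih _ (by omega) c' (hc'c.trans hcS) (hc'c.trans hcAB) hc'pos hc'R rfl with hc'A | hc'B
  · have hbc' : b ∈ c'.support := by simpa [hc'b] using hbc
    exact hAB.ne_of_mem (hc'A hbc') hbB rfl
  · have hαc' : α ∉ c'.support := fun h => hAB.ne_of_mem hαA (hc'B h) rfl
    have hc'α_orth : ⟪linearCombination ℤ id c', α⟫ = 0 := by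
      rw [real_inner_comm]
      exact inner_linearCombination_int_eq_zero fun a ha => horth α hαA a (hc'B ha)
    have hc'0 : c' ≠ 0 := fun h => mem_support_iff.mp hbc (by simpa [h] using hc'b.symm)
    refine hR.add_notMem_of_inner_eq_zero hS (hc'c.trans hcS) hc'pos hc'0 hc'R (hcS hαc) hαc'
      hc'α_orth ?_
    rwa [hc'_eq, sub_add_cancel]

theorem support_subset_or (hR : IsGRS R) (hS : IsBase R S) {A B : Set E}
    (hAB : Disjoint A B) (horth : ∀ a ∈ A, ∀ b ∈ B, ⟪a, b⟫ = 0) (c : E →₀ ℤ) (hcS : ↑c.support ⊆ S)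
    (hcAB : ↑c.support ⊆ A ∪ B) (hc : linearCombination ℤ id c ∈ R) :
    ↑c.support ⊆ A ∨ ↑c.support ⊆ B := by
  rcases hS.nonneg_or_nonpos hcS hc with hpos | hneg
  · exact hR.support_subset_or_of_nonneg hS hAB horth c hcS hcAB hpos hc
  · simpa using hR.support_subset_or_of_nonneg hS hAB horth (-c) (by simpa using hcS)
      (by simpa using hcAB) (fun a => by simpa using hneg a) (by simpa using hR.neg_mem hc)

end IsGRS

end InnerProduct

/-- The support of a root is connected. -/
theorem stmt7 (R S : Set V) (hR : IsGRS R) (hS : IsBase R S) (β : V) (hβ : β ∈ R)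
    (c : V →₀ ℤ) (hsupp : ↑c.support ⊆ S)
    (hsum : β = c.sum fun α n => (n : ℝ) • α) :
    ¬∃ I' I'' : Set V, (↑c.support : Set V) = I' ∪ I'' ∧ Disjoint I' I'' ∧
      I'.Nonempty ∧ I''.Nonempty ∧ ∀ α' ∈ I', ∀ α'' ∈ I'', ⟪α', α''⟫ = 0 := by
  rintro ⟨I', I'', hpart, hdisj, ⟨a, ha⟩, ⟨b, hb⟩, horth⟩
  rw [sum_intCast_smul_eq_linearCombination] at hsum
  rcases hR.support_subset_or hS hdisj horth c hsupp hpart.subset (hsum ▸ hβ) with h | h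
  · exact hdisj.ne_of_mem (h (hpart ▸ Or.inr hb)) hb rfl
  · exact hdisj.ne_of_mem ha (h (hpart ▸ Or.inl ha)) rfl
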